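/- For X = √(g₂^{-1}g₁) with g_i = I + ε h_i in dimension 4, the second elementary symmetric invariant e₂(X) = (1/2)((Tr X)² - Tr(X²)) satisfies e₂(X) = 6 + (3ε/2) Tr(h₁ - h₂) + (ε²/8)[(Tr h₁)² + (Tr h₂)² - 2 Tr(h₁)Tr(h₂) + 8 Tr(h₂²) - 4 Tr(h₁²) - 4 Tr(h₁h₂)] + O(ε³). -/

import Mathlib

open Asymptotics Filter Matrix

/-- The generalized binomial coefficient `C(1/2, k)`. -/
noncomputable def halfChoose (k : ℕ) : ℝ :=
  (∏ i ∈ Finset.range k, ((1 : ℝ) / 2 - i)) / (k.factorial : ℝ)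

/-- The principal square root of a matrix close to `1`, defined by the binomial
series `√M = ∑_{k≥0} C(1/2,k) (M-1)^k`. -/
noncomputable def matSqrt {n : ℕ} (M : Matrix (Fin n) (Fin n) ℝ) :
    Matrix (Fin n) (Fin n) ℝ :=
  ∑' k : ℕ, halfChoose k • (M - 1) ^ k

/-! Write `g₂⁻¹g₁ = 1 + x`. The Neumann series for `(1 + εh₂)⁻¹` gives
`x = ε(h₁ - h₂) - ε²h₂(h₁ - h₂) + O(ε³)`, and the binomial series, whose coefficients are bounded
by `1`, gives `√(1 + x) = 1 + x/2 - x²/8 + O(‖x‖³)`. Hence `X = 1 + εa + ε²b + O(ε³)` with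
`a = (h₁ - h₂)/2` and `b = -h₂(h₁ - h₂)/2 - (h₁ - h₂)²/8`. As `e₂` is quadratic, it moves by
`O(ε³)` under this perturbation, and `e₂(1 + εa + ε²b)` is an explicit polynomial in `ε` whose
coefficients up to `ε²` are the claimed ones. -/

open Topology

lemma halfChoose_succ (k : ℕ) :
    halfChoose (k + 1) = halfChoose k * ((1 / 2 - k) / (k + 1)) := by
  simp only [halfChoose, Finset.prod_range_succ, Nat.factorial_succ]
  push_cast
  rw [div_mul_div_comm, mul_comm ((k : ℝ) + 1)]

lemma abs_halfChoose_le_one (k : ℕ) : |halfChoose k| ≤ 1 := by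
  induction k with
  | zero => simp [halfChoose]
  | succ k ih =>
    have hratio : |(1 / 2 - (k : ℝ)) / (k + 1)| ≤ 1 := by
      rw [abs_div, abs_of_pos (by positivity : (0 : ℝ) < k + 1), div_le_one (by positivity),
        abs_le]
      constructor <;> linarith [(Nat.cast_nonneg k : (0 : ℝ) ≤ k)]
    rw [halfChoose_succ, abs_mul]
    exact mul_le_one₀ ih (abs_nonneg _) hratio

section BinomialSeries

variable {R : Type*} [NormedRing R] [NormedAlgebra ℝ R]

lemma sum_range_three_halfChoose_smul_pow (x : R) :
    ∑ k ∈ Finset.range 3, halfChoose k • x ^ k = 1 + (1 / 2 : ℝ) • x - (1 / 8 : ℝ) • x ^ 2 := by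
  simp only [Finset.sum_range_succ, Finset.sum_range_zero, halfChoose, Finset.prod_range_succ,
    Finset.prod_range_zero]
  norm_num
  module

lemma norm_halfChoose_smul_pow_add_three_le {x : R} (hx : ‖x‖ ≤ 1 / 2) (k : ℕ) :
    ‖halfChoose (k + 3) • x ^ (k + 3)‖ ≤ ‖x‖ ^ 3 * (1 / 2) ^ k :=
  calc ‖halfChoose (k + 3) • x ^ (k + 3)‖ ≤ 1 * ‖x‖ ^ (k + 3) := by
        rw [norm_smul]
        exact mul_le_mul (abs_halfChoose_le_one _) (norm_pow_le' x (by omega))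
          (norm_nonneg _) zero_le_one
    _ ≤ ‖x‖ ^ 3 * (1 / 2) ^ k := by
        rw [one_mul, pow_add, mul_comm]
        gcongr

lemma norm_tsum_halfChoose_smul_pow_sub_le [CompleteSpace R] {x : R} (hx : ‖x‖ ≤ 1 / 2) :
    ‖∑' k, halfChoose k • x ^ k - (1 + (1 / 2 : ℝ) • x - (1 / 8 : ℝ) • x ^ 2)‖
      ≤ 2 * ‖x‖ ^ 3 := by
  have hgeom : Summable fun k : ℕ => ‖x‖ ^ 3 * (1 / 2 : ℝ) ^ k :=
    (summable_geometric_of_lt_one (by norm_num) (by norm_num)).mul_left _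
  have htail : Summable fun k => halfChoose (k + 3) • x ^ (k + 3) :=
    .of_norm_bounded hgeom (norm_halfChoose_smul_pow_add_three_le hx)
  have hsum : Summable fun k => halfChoose k • x ^ k :=
    (summable_nat_add_iff (f := fun k => halfChoose k • x ^ k) 3).1 htail
  rw [← hsum.sum_add_tsum_nat_add 3, sum_range_three_halfChoose_smul_pow, add_sub_cancel_left]
  calc ‖∑' k, halfChoose (k + 3) • x ^ (k + 3)‖
      ≤ ∑' k : ℕ, ‖x‖ ^ 3 * (1 / 2 : ℝ) ^ k :=
        tsum_of_norm_bounded hgeom.hasSum (norm_halfChoose_smul_pow_add_three_le hx)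
    _ = 2 * ‖x‖ ^ 3 := by
        rw [tsum_mul_left, tsum_geometric_of_lt_one (by norm_num) (by norm_num)]
        ring

end BinomialSeries

section Asymptotics

variable {α R : Type*} [NormedRing R]

lemma Asymptotics.IsBigO.mul_sub_mul {f f' g g' : α → R} {k : α → ℝ} {l : Filter α}
    (hf : f =O[l] fun _ => (1 : ℝ)) (hg' : g' =O[l] fun _ => (1 : ℝ))
    (hff' : (fun a => f a - f' a) =O[l] k) (hgg' : (fun a => g a - g' a) =O[l] k) :
    (fun a => f a * g a - f' a * g' a) =O[l] k := by
  have hfirst : (fun a => f a * (g a - g' a)) =O[l] k := by simpa using hf.mul hgg'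
  have hsecond : (fun a => (f a - f' a) * g' a) =O[l] k := by simpa using hff'.mul hg'
  exact (hfirst.add hsecond).congr_left fun a => by noncomm_ring

variable [NormedAlgebra ℝ R]

lemma isBigO_tsum_halfChoose_smul_pow_sub [CompleteSpace R] {l : Filter α} {x : α → R}
    {g : α → ℝ} (hx : x =O[l] g) (hx₀ : Tendsto x l (𝓝 0)) :
    (fun a => ∑' k, halfChoose k • x a ^ k - (1 + (1 / 2 : ℝ) • x a - (1 / 8 : ℝ) • x a ^ 2))
      =O[l] fun a => g a ^ 3 := by
  have hsmall : ∀ᶠ a in l, ‖x a‖ ≤ 1 / 2 :=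
    hx₀.norm.eventually (ge_mem_nhds (by norm_num))
  refine (IsBigO.of_bound 2 (hsmall.mono fun a ha => ?_)).trans (hx.norm_left.pow 3)
  simpa using norm_tsum_halfChoose_smul_pow_sub_le ha

lemma isBigO_smul_pow (c : R) (k : ℕ) : (fun ε : ℝ => ε ^ k • c) =O[𝓝 0] fun ε => ε ^ k :=
  IsBigO.of_bound ‖c‖ (Eventually.of_forall fun ε => by rw [norm_smul, mul_comm])

variable [HasSummableGeomSeries R]

lemma eventually_isUnit_one_add_smul (h : R) : ∀ᶠ ε : ℝ in 𝓝 0, IsUnit (1 + ε • h) := by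
  have hcont : Continuous fun ε : ℝ => 1 + ε • h := by fun_prop
  exact hcont.continuousAt.eventually_mem (Units.isOpen.mem_nhds (by simp))

lemma isBigO_inverse_one_add_smul_sub (h : R) :
    (fun ε : ℝ => Ring.inverse (1 + ε • h) - (1 - ε • h)) =O[𝓝 0] fun ε => ε ^ 2 := by
  have hlin : Tendsto (fun ε : ℝ => ε • h) (𝓝 0) (𝓝 0) := by
    simpa using (tendsto_id : Tendsto (fun ε : ℝ => ε) (𝓝 0) (𝓝 0)).smul_const h
  have hsecond := (NormedRing.inverse_add_norm_diff_second_order (1 : Rˣ)).comp_tendsto hlin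
  refine (hsecond.congr_left fun ε => ?_).trans
    (IsBigO.of_bound (‖h‖ ^ 2) (Eventually.of_forall fun ε => ?_))
  · simp only [Function.comp_apply, Units.val_one, inv_one, one_mul, mul_one]
    abel
  · simp [norm_smul, mul_pow, mul_comm]

lemma isBigO_inverse_one_add_smul_mul_sub (h₁ h₂ : R) :
    (fun ε : ℝ => Ring.inverse (1 + ε • h₂) * (1 + ε • h₁) - 1
        - (ε • (h₁ - h₂) - ε ^ 2 • (h₂ * (h₁ - h₂)))) =O[𝓝 0] fun ε => ε ^ 3 := by
  have hprod := (isBigO_inverse_one_add_smul_sub h₂).mul (isBigO_smul_pow (h₁ - h₂) 1)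
  refine (hprod.congr' ((eventually_isUnit_one_add_smul h₂).mono fun ε hε => ?_)
    (Eventually.of_forall fun ε => by ring))
  dsimp only
  have hg₁ : 1 + ε • h₁ = (1 + ε • h₂) + ε • (h₁ - h₂) := by module
  rw [hg₁, mul_add, Ring.inverse_mul_cancel _ hε]
  simp only [pow_one, sub_mul, one_mul, smul_mul_assoc, mul_smul_comm, add_sub_cancel_left]
  module

end Asymptotics

-- The statement involves no norm on matrices; any submultiplicative one serves for the estimates.
attribute [local instance] Matrix.linftyOpNormedRing Matrix.linftyOpNormedAlgebra

section SecondInvariant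

variable {α m : Type*} [Fintype m] [DecidableEq m]

noncomputable def e₂ (X : Matrix m m ℝ) : ℝ := (X.trace ^ 2 - (X ^ 2).trace) / 2

lemma e₂_one_add_smul_add_sq_smul (a b : Matrix m m ℝ) (ε : ℝ) :
    e₂ (1 + ε • a + ε ^ 2 • b)
      = Fintype.card m * (Fintype.card m - 1) / 2 + (Fintype.card m - 1) * ε * a.trace
        + ε ^ 2 * (a.trace ^ 2 / 2 + (Fintype.card m - 1) * b.trace - (a * a).trace / 2)
        + ε ^ 3 * (a.trace * b.trace - (a * b).trace) + ε ^ 4 * e₂ b := by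
  simp only [e₂, sq, add_mul, mul_add, smul_mul_assoc, mul_smul_comm, one_mul,
    mul_one, trace_add, trace_smul, trace_one, smul_eq_mul, trace_mul_comm b a]
  ring

lemma isBigO_e₂_sub_e₂ {l : Filter α} {X Y : α → Matrix m m ℝ} {k : α → ℝ}
    (hX : X =O[l] fun _ => (1 : ℝ)) (hY : Y =O[l] fun _ => (1 : ℝ))
    (hXY : (fun a => X a - Y a) =O[l] k) :
    (fun a => e₂ (X a) - e₂ (Y a)) =O[l] k := by
  let tr : Matrix m m ℝ →L[ℝ] ℝ := (traceLinearMap m ℝ ℝ).toContinuousLinearMap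
  have htr {f : α → Matrix m m ℝ} {g : α → ℝ} (hf : f =O[l] g) :
      (fun a => (f a).trace) =O[l] g :=
    (tr.isBigO_comp f l).trans hf
  have htr_sub : (fun a => (X a).trace - (Y a).trace) =O[l] k := by
    simpa only [trace_sub] using htr hXY
  have hsq_tr : (fun a => (X a).trace * (X a).trace - (Y a).trace * (Y a).trace) =O[l] k :=
    (htr hX).mul_sub_mul (htr hY) htr_sub htr_sub
  have htr_sq : (fun a => (X a * X a).trace - (Y a * Y a).trace) =O[l] k := by
    simpa only [trace_sub] using htr (hX.mul_sub_mul hY hXY hXY)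
  refine ((hsq_tr.sub htr_sq).const_mul_left (1 / 2)).congr_left fun a => ?_
  simp only [e₂, sq]
  ring

lemma isBigO_matSqrt_inv_mul_sub {n : ℕ} (h₁ h₂ : Matrix (Fin n) (Fin n) ℝ) :
    (fun ε : ℝ => matSqrt ((1 + ε • h₂)⁻¹ * (1 + ε • h₁))
      - (1 + ε • ((1 / 2 : ℝ) • (h₁ - h₂))
        + ε ^ 2 • (-((1 / 2 : ℝ) • (h₂ * (h₁ - h₂))) - (1 / 8 : ℝ) • ((h₁ - h₂) * (h₁ - h₂)))))
      =O[𝓝 0] fun ε => ε ^ 3 := by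
  set D := h₁ - h₂
  set x : ℝ → Matrix (Fin n) (Fin n) ℝ := fun ε => (1 + ε • h₂)⁻¹ * (1 + ε • h₁) - 1 with hx
  have hx₃ : (fun ε => x ε - (ε • D - ε ^ 2 • (h₂ * D))) =O[𝓝 0] fun ε => ε ^ 3 := by
    simpa only [hx, nonsing_inv_eq_ringInverse] using isBigO_inverse_one_add_smul_mul_sub h₁ h₂
  have hx₂ : (fun ε => x ε - ε • D) =O[𝓝 0] fun ε => ε ^ 2 :=
    ((hx₃.trans (isLittleO_pow_pow (by norm_num : 2 < 3)).isBigO).sub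
      (isBigO_smul_pow (h₂ * D) 2)).congr_left fun ε => by module
  have hx₁ : x =O[𝓝 0] fun ε => ε :=
    ((hx₂.trans (isLittleO_pow_pow (by norm_num : 1 < 2)).isBigO).add
      (isBigO_smul_pow D 1)).congr (fun ε => by simp) (fun ε => pow_one ε)
  have htail : (fun ε => matSqrt ((1 + ε • h₂)⁻¹ * (1 + ε • h₁))
      - (1 + (1 / 2 : ℝ) • x ε - (1 / 8 : ℝ) • x ε ^ 2)) =O[𝓝 0] fun ε => ε ^ 3 :=
    isBigO_tsum_halfChoose_smul_pow_sub hx₁ (hx₁.trans_tendsto tendsto_id)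
  have hsq : (fun ε => x ε * x ε - (ε • D) * (ε • D)) =O[𝓝 0] fun ε => ε ^ 3 := by
    have hleft : (fun ε => x ε * (x ε - ε • D)) =O[𝓝 0] fun ε => ε ^ 3 :=
      (hx₁.mul hx₂).congr_right fun ε => by ring
    have hright : (fun ε => (x ε - ε • D) * ε ^ 1 • D) =O[𝓝 0] fun ε => ε ^ 3 :=
      (hx₂.mul (isBigO_smul_pow D 1)).congr_right fun ε => by ring
    refine (hleft.add hright).congr_left fun ε => ?_
    simp only [pow_one, mul_sub, sub_mul, smul_mul_assoc, mul_smul_comm, smul_smul]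
    module
  refine ((htail.add (hx₃.const_smul_left (1 / 2 : ℝ))).sub
    (hsq.const_smul_left (1 / 8 : ℝ))).congr_left fun ε => ?_
  simp only [Pi.smul_apply, sq, smul_mul_assoc, mul_smul_comm, smul_smul]
  module

end SecondInvariant

theorem e2_expansion_general (h₁ h₂ : Matrix (Fin 4) (Fin 4) ℝ) :
    (fun ε : ℝ =>
        (((matSqrt ((1 + ε • h₂)⁻¹ * (1 + ε • h₁))).trace ^ 2
            - ((matSqrt ((1 + ε • h₂)⁻¹ * (1 + ε • h₁))) ^ 2).trace) / 2)
          - (6 + 3 * ε / 2 * (h₁ - h₂).trace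
            + ε ^ 2 / 8 * (h₁.trace ^ 2 + h₂.trace ^ 2
              - 2 * h₁.trace * h₂.trace
              + 8 * (h₂ ^ 2).trace - 4 * (h₁ ^ 2).trace - 4 * (h₁ * h₂).trace)))
      =O[nhds 0] fun ε : ℝ => ε ^ 3 := by
  set a : Matrix (Fin 4) (Fin 4) ℝ := (1 / 2 : ℝ) • (h₁ - h₂)
  set b : Matrix (Fin 4) (Fin 4) ℝ :=
    -((1 / 2 : ℝ) • (h₂ * (h₁ - h₂))) - (1 / 8 : ℝ) • ((h₁ - h₂) * (h₁ - h₂))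
  have hX := isBigO_matSqrt_inv_mul_sub h₁ h₂
  have hXp_bdd : (fun ε : ℝ => 1 + ε • a + ε ^ 2 • b) =O[𝓝 0] fun _ => (1 : ℝ) :=
    (Continuous.tendsto (by fun_prop) 0).isBigO_one ℝ
  have hcube : (fun ε : ℝ => ε ^ 3) =O[𝓝 0] fun _ => (1 : ℝ) :=
    ((continuous_pow 3).tendsto 0).isBigO_one ℝ
  have hX_bdd := ((hX.trans hcube).add hXp_bdd).congr_left fun ε => sub_add_cancel _ _
  have hlin : a.trace = (h₁ - h₂).trace / 2 := by
    simp only [a, trace_smul, smul_eq_mul]; ring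
  have hquad : a.trace ^ 2 / 2 + 3 * b.trace - (a * a).trace / 2
      = (h₁.trace ^ 2 + h₂.trace ^ 2 - 2 * h₁.trace * h₂.trace
          + 8 * (h₂ ^ 2).trace - 4 * (h₁ ^ 2).trace - 4 * (h₁ * h₂).trace) / 8 := by
    simp only [a, b, sq, smul_mul_assoc, mul_smul_comm, mul_sub, sub_mul, trace_sub,
      trace_neg, trace_smul, smul_eq_mul, trace_mul_comm h₂ h₁]
    ring
  have hpoly : (fun ε : ℝ => e₂ (1 + ε • a + ε ^ 2 • b) - (6 + 3 * ε / 2 * (h₁ - h₂).trace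
      + ε ^ 2 / 8 * (h₁.trace ^ 2 + h₂.trace ^ 2 - 2 * h₁.trace * h₂.trace
        + 8 * (h₂ ^ 2).trace - 4 * (h₁ ^ 2).trace - 4 * (h₁ * h₂).trace)))
      =O[𝓝 0] fun ε => ε ^ 3 := by
    refine ((isBigO_smul_pow (a.trace * b.trace - (a * b).trace) 3).add
      ((isBigO_smul_pow (e₂ b) 4).trans (isLittleO_pow_pow (by norm_num : 3 < 4)).isBigO))
      |>.congr_left fun ε => ?_
    rw [e₂_one_add_smul_add_sq_smul, Fintype.card_fin, smul_eq_mul, smul_eq_mul]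
    push_cast
    linear_combination (-3 * ε) * hlin - ε ^ 2 * hquad
  exact ((isBigO_e₂_sub_e₂ hX_bdd hXp_bdd hX).add hpoly).congr_left fun ε =>
    sub_add_sub_cancel _ _ _

/-- In dimension 4, for `X = √(g₂⁻¹g₁)` with `g_i = I + ε h_i`, the invariant
`e₂(X) = ((Tr X)² - Tr X²)/2` satisfies
`e₂(X) = 6 + (3ε/2)Tr(h₁-h₂) + (ε²/8)[(Tr h₁)² + (Tr h₂)² - 2 Tr h₁ Tr h₂
  + 8 Tr h₂² - 4 Tr h₁² - 4 Tr(h₁h₂)] + O(ε³)`. -/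
theorem e2_expansion (h₁ h₂ : Matrix (Fin 4) (Fin 4) ℝ)
    (hs₁ : h₁.IsSymm) (hs₂ : h₂.IsSymm) :
    (fun ε : ℝ =>
        (((matSqrt ((1 + ε • h₂)⁻¹ * (1 + ε • h₁))).trace ^ 2
            - ((matSqrt ((1 + ε • h₂)⁻¹ * (1 + ε • h₁))) ^ 2).trace) / 2)
          - (6 + 3 * ε / 2 * (h₁ - h₂).trace
            + ε ^ 2 / 8 * (h₁.trace ^ 2 + h₂.trace ^ 2
              - 2 * h₁.trace * h₂.trace
              + 8 * (h₂ ^ 2).trace - 4 * (h₁ ^ 2).trace - 4 * (h₁ * h₂).trace)))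
      =O[nhds 0] fun ε : ℝ => ε ^ 3 :=
  e2_expansion_general h₁ h₂
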